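/- Fix n ≥ 1 variables and m ≥ 1 clauses of a 3-SAT instance given by c : Fin m → Fin 3 → Fin n × Bool, and consider the associated POMDP. If no assignment v : Fin n → Bool satisfies every clause, then for every deterministic memoryless policy σ : Z → A (inducing P_σ(s,s') := δ(s, σ(o s))(s')), the reachability probability satisfies ReachProb(P_σ, ⊤, s₀) ≤ 1 − 1/m. -/

import Mathlib

open scoped BigOperators

/-- Iterates whose supremum is the reachability probability. -/
noncomputable def reachAux {S : Type*} [Fintype S] [DecidableEq S]
    (P : S → S → ℝ) (t : S) : ℕ → S → ℝ
  | 0, x => if x = t then 1 else 0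
  | n + 1, x => if x = t then 1 else ∑ y, P x y * reachAux P t n y

/-- Reachability probability of target `t` starting from `s` in the Markov chain `P`. -/
noncomputable def ReachProb {S : Type*} [Fintype S] [DecidableEq S]
    (P : S → S → ℝ) (t s : S) : ℝ :=
  ⨆ n : ℕ, reachAux P t n s

/-- The three special states/observations of the 3-SAT POMDP. -/
inductive Sp | start | target | sink
  deriving DecidableEq

instance : Fintype Sp :=
  ⟨{Sp.start, Sp.target, Sp.sink}, fun x => by cases x <;> simp⟩

/-- Transition function of the POMDP associated with a 3-SAT instance
`c : Fin m → Fin 3 → Fin n × Bool`. -/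
noncomputable def satTrans (n m : ℕ) (c : Fin m → Fin 3 → Fin n × Bool) :
    (Fin m × Fin 3) ⊕ Sp → Bool → ((Fin m × Fin 3) ⊕ Sp) → ℝ :=
  fun s a s' =>
    match s with
    | Sum.inr Sp.start =>
        match s' with
        | Sum.inl (_, k) => if k = (0 : Fin 3) then (1 : ℝ) / m else 0
        | Sum.inr _ => 0
    | Sum.inr Sp.target => if s' = Sum.inr Sp.target then 1 else 0
    | Sum.inr Sp.sink => if s' = Sum.inr Sp.sink then 1 else 0
    | Sum.inl (j, k) =>
        if a = (c j k).2 then (if s' = Sum.inr Sp.target then 1 else 0)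
        else if (k : ℕ) < 2 then (if s' = Sum.inl (j, k + 1) then 1 else 0)
        else if s' = Sum.inr Sp.sink then 1 else 0

/-- Observation function of the POMDP associated with a 3-SAT instance. -/
def satObs (n m : ℕ) (c : Fin m → Fin 3 → Fin n × Bool) :
    (Fin m × Fin 3) ⊕ Sp → Fin n ⊕ Sp
  | Sum.inl (j, k) => Sum.inl (c j k).1
  | Sum.inr x => Sum.inr x

/-!
A memoryless policy `σ` reads off the assignment `v i = σ (inl i)`. If the instance is
unsatisfiable, some clause `j` is falsified by `v`, so from every literal state of `j` the policy
takes the wrong action: the literal states of `j` together with the sink form a closed class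
avoiding the target. The start state enters this class with probability `1/m`, hence the
target is reached with probability at most `1 - 1/m`.
-/

section ReachProb

variable {S : Type*} [Fintype S] [DecidableEq S] {P : S → S → ℝ} {t : S}

theorem reachAux_succ_of_ne {x : S} (hx : x ≠ t) (N : ℕ) :
    reachAux P t (N + 1) x = ∑ y, P x y * reachAux P t N y := by
  simp [reachAux, hx]

theorem reachAux_le_one (hP : ∀ x y, 0 ≤ P x y) (hrow : ∀ x, ∑ y, P x y ≤ 1) (N : ℕ) (x : S) :
    reachAux P t N x ≤ 1 := by
  induction N generalizing x with
  | zero => simp only [reachAux]; split_ifs <;> norm_num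
  | succ N ih =>
    simp only [reachAux]
    split_ifs
    · exact le_rfl
    · calc ∑ y, P x y * reachAux P t N y ≤ ∑ y, P x y :=
            Finset.sum_le_sum fun y _ => mul_le_of_le_one_right (hP x y) (ih y)
        _ ≤ 1 := hrow x

theorem reachAux_eq_zero_of_mem_closed {C : Finset S} (htC : t ∉ C)
    (hC : ∀ x ∈ C, ∀ y, P x y ≠ 0 → y ∈ C) (N : ℕ) {x : S} (hx : x ∈ C) :
    reachAux P t N x = 0 := by
  induction N generalizing x with
  | zero => simp [reachAux, ne_of_mem_of_not_mem hx htC]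
  | succ N ih =>
    rw [reachAux_succ_of_ne (ne_of_mem_of_not_mem hx htC)]
    refine Finset.sum_eq_zero fun y _ => ?_
    by_cases hy : P x y = 0
    · rw [hy, zero_mul]
    · rw [ih (hC x hx y hy), mul_zero]

theorem reachProb_le_one_sub_of_closed {C : Finset S} (htC : t ∉ C)
    (hC : ∀ x ∈ C, ∀ y, P x y ≠ 0 → y ∈ C) (hP : ∀ x y, 0 ≤ P x y) (hrow : ∀ x, ∑ y, P x y ≤ 1)
    {s : S} (hs : s ≠ t) :
    ReachProb P t s ≤ 1 - ∑ y ∈ C, P s y := by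
  have hCc : ∑ y ∈ Cᶜ, P s y ≤ 1 - ∑ y ∈ C, P s y := by
    rw [le_sub_iff_add_le, Finset.sum_compl_add_sum]; exact hrow s
  refine ciSup_le fun N => ?_
  cases N with
  | zero =>
    simp only [reachAux, if_neg hs]
    exact (Finset.sum_nonneg fun y _ => hP s y).trans hCc
  | succ N =>
    rw [reachAux_succ_of_ne hs, ← Finset.sum_compl_add_sum C,
      Finset.sum_eq_zero (s := C) fun y hy => by
        rw [reachAux_eq_zero_of_mem_closed htC hC N hy, mul_zero],
      add_zero]
    refine le_trans (Finset.sum_le_sum fun y _ => ?_) hCc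
    exact mul_le_of_le_one_right (hP s y) (reachAux_le_one hP hrow N y)

end ReachProb

section SatPOMDP

variable {n m : ℕ} {c : Fin m → Fin 3 → Fin n × Bool}

theorem satTrans_nonneg (s : (Fin m × Fin 3) ⊕ Sp) (a : Bool) (s' : (Fin m × Fin 3) ⊕ Sp) :
    0 ≤ satTrans n m c s a s' := by
  rcases s with ⟨j, k⟩ | _ | _ | _ <;> rcases s' with ⟨j', k'⟩ | _ | _ | _ <;>
    simp only [satTrans] <;> (try split_ifs) <;> positivity

theorem sum_satTrans_eq_one (hm : m ≠ 0) (s : (Fin m × Fin 3) ⊕ Sp) (a : Bool) :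
    ∑ s', satTrans n m c s a s' = 1 := by
  rcases s with ⟨j, k⟩ | _ | _ | _
  · simp only [satTrans]; split_ifs <;> simp
  · simp [satTrans, Fintype.sum_sum_type, Fintype.sum_prod_type]
    field_simp
  · simp [satTrans]
  · simp [satTrans]

def clauseTrap (j : Fin m) : Finset ((Fin m × Fin 3) ⊕ Sp) :=
  insert (Sum.inr Sp.sink) (Finset.univ.image fun k => Sum.inl (j, k))

theorem satTrans_mem_clauseTrap {σ : Fin n ⊕ Sp → Bool} {j : Fin m}
    (hσ : ∀ k, σ (Sum.inl (c j k).1) ≠ (c j k).2) {x : (Fin m × Fin 3) ⊕ Sp} (hx : x ∈ clauseTrap j)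
    {y : (Fin m × Fin 3) ⊕ Sp} (hy : satTrans n m c x (σ (satObs n m c x)) y ≠ 0) :
    y ∈ clauseTrap j := by
  simp only [clauseTrap, Finset.mem_insert, Finset.mem_image, Finset.mem_univ, true_and] at hx ⊢
  rcases hx with rfl | ⟨k, rfl⟩
  · simp only [satTrans, ite_ne_right_iff] at hy
    exact Or.inl hy.1
  · simp only [satTrans, satObs, hσ k, if_false] at hy
    split_ifs at hy with _ hy' hy' <;> simp_all

end SatPOMDP

theorem satPOMDP_unsat_bound_general (n m : ℕ) (hm : 1 ≤ m)
    (c : Fin m → Fin 3 → Fin n × Bool)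
    (hunsat : ¬ ∃ v : Fin n → Bool, ∀ j : Fin m, ∃ k : Fin 3,
        v (c j k).1 = (c j k).2)
    (σ : (Fin n ⊕ Sp) → Bool) :
    ReachProb (fun s s' => satTrans n m c s (σ (satObs n m c s)) s')
        (Sum.inr Sp.target) (Sum.inr Sp.start) ≤ 1 - 1 / m := by
  obtain ⟨j, hj⟩ : ∃ j : Fin m, ∀ k : Fin 3, σ (Sum.inl (c j k).1) ≠ (c j k).2 := by
    by_contra! h
    exact hunsat ⟨fun i => σ (Sum.inl i), h⟩
  have hclosed : ∀ x ∈ clauseTrap j, ∀ y, satTrans n m c x (σ (satObs n m c x)) y ≠ 0 →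
      y ∈ clauseTrap j := fun _ hx _ hy => satTrans_mem_clauseTrap hj hx hy
  have hstart : Sum.inl (j, 0) ∈ clauseTrap j := by simp [clauseTrap]
  refine (reachProb_le_one_sub_of_closed (by simp [clauseTrap]) hclosed
    (fun _ _ => satTrans_nonneg _ _ _) (fun _ => (sum_satTrans_eq_one (by omega) _ _).le)
    (by simp)).trans ?_
  gcongr
  refine le_of_eq_of_le ?_ (Finset.single_le_sum (fun _ _ => satTrans_nonneg _ _ _) hstart)
  simp [satTrans]

/-- If the 3-SAT instance is unsatisfiable, then every deterministic
memoryless policy on the associated POMDP reaches the target with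
probability at most `1 - 1/m`. -/
theorem satPOMDP_unsat_bound (n m : ℕ) (hn : 1 ≤ n) (hm : 1 ≤ m)
    (c : Fin m → Fin 3 → Fin n × Bool)
    (hunsat : ¬ ∃ v : Fin n → Bool, ∀ j : Fin m, ∃ k : Fin 3,
        v (c j k).1 = (c j k).2)
    (σ : (Fin n ⊕ Sp) → Bool) :
    ReachProb (fun s s' => satTrans n m c s (σ (satObs n m c s)) s')
        (Sum.inr Sp.target) (Sum.inr Sp.start) ≤ 1 - 1 / m :=
  satPOMDP_unsat_bound_general n m hm c hunsat σ
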